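/- (Policy improvement.) Let μ and μ' be stationary deterministic policies such that T_{μ'} J_μ = T J_μ (μ' is greedy with respect to J_μ). Then J_{μ'}(x) ≤ J_μ(x) for every x ∈ S. -/

import Mathlib

/-- The Bellman operator `T` of the finite discounted MDP. -/
noncomputable def Tbell {S A : Type*} [Fintype S] [Fintype A] [Nonempty A]
    (P : S → A → S → ℝ) (g : S → A → ℝ) (α : ℝ) (J : S → ℝ) : S → ℝ :=
  fun x => Finset.univ.inf' Finset.univ_nonempty
    (fun a : A => g x a + α * ∑ y, P x a y * J y)

/-- The one-stage DP operator `T_μ` for a stationary deterministic policy `μ`. -/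
noncomputable def Tpol {S A : Type*} [Fintype S]
    (P : S → A → S → ℝ) (g : S → A → ℝ) (α : ℝ) (μ : S → A) (J : S → ℝ) : S → ℝ :=
  fun x => g x (μ x) + α * ∑ y, P x (μ x) y * J y

/-- The transition matrix `P_μ` of a stationary deterministic policy `μ`. -/
def Pmat {S A : Type*} (P : S → A → S → ℝ) (μ : S → A) : Matrix S S ℝ :=
  fun x y => P x (μ x) y

/-- The stage-cost vector `g_μ` of a stationary deterministic policy `μ`. -/
def gvec {S A : Type*} (g : S → A → ℝ) (μ : S → A) : S → ℝ :=
  fun x => g x (μ x)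

/-- The value function `J_μ(x) = ∑_{t} α^t (P_μ^t g_μ)(x)` of policy `μ`. -/
noncomputable def Jval {S A : Type*} [Fintype S] [DecidableEq S]
    (P : S → A → S → ℝ) (g : S → A → ℝ) (α : ℝ) (μ : S → A) : S → ℝ :=
  fun x => ∑' t : ℕ, α ^ t * ((Pmat P μ ^ t).mulVec (gvec g μ)) x

/-!
`J_μ` is the fixed point of `T_μ`, so greediness gives `T_{μ'} J_μ = T J_μ ≤ T_μ J_μ = J_μ`.
Subtracting this from `J_{μ'} = T_{μ'} J_{μ'}` gives `D ≤ α P_{μ'} D` for `D = J_{μ'} - J_μ`, and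
since `P_{μ'}` is row-stochastic, evaluating at a maximum of `D` yields `max D ≤ α max D`,
hence `D ≤ 0` because `α < 1`.
-/

open Matrix

namespace Matrix

variable {n : Type*} [Fintype n] [DecidableEq n] {M : Matrix n n ℝ}

theorem mulVec_apply_le_of_mem_rowStochastic (hM : M ∈ rowStochastic ℝ n) {v : n → ℝ} {c : ℝ}
    (hv : ∀ j, v j ≤ c) (i : n) : (M *ᵥ v) i ≤ c :=
  calc (M *ᵥ v) i = ∑ j, M i j * v j := rfl
    _ ≤ ∑ j, M i j * c := by
      gcongr with j
      · exact nonneg_of_mem_rowStochastic hM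
      · exact hv j
    _ = c := by rw [← Finset.sum_mul, sum_row_of_mem_rowStochastic hM, one_mul]

theorem abs_mulVec_apply_le_norm_of_mem_rowStochastic (hM : M ∈ rowStochastic ℝ n)
    (v : n → ℝ) (i : n) : |(M *ᵥ v) i| ≤ ‖v‖ := by
  have hv : ∀ j, |v j| ≤ ‖v‖ := fun j => norm_le_pi_norm v j
  have hupper := mulVec_apply_le_of_mem_rowStochastic hM
    (fun j => (le_abs_self (v j)).trans (hv j)) i
  have hlower := mulVec_apply_le_of_mem_rowStochastic hM (v := -v)
    (fun j => (neg_le_abs (v j)).trans (hv j)) i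
  rw [mulVec_neg, Pi.neg_apply] at hlower
  exact abs_le.mpr ⟨by linarith, hupper⟩

theorem nonpos_of_le_smul_mulVec (hM : M ∈ rowStochastic ℝ n) {α : ℝ} (hα0 : 0 ≤ α)
    (hα1 : α < 1) {v : n → ℝ} (hv : ∀ i, v i ≤ α * (M *ᵥ v) i) (i : n) : v i ≤ 0 := by
  have : Nonempty n := ⟨i⟩
  obtain ⟨k, hk⟩ := Finite.exists_max v
  have hvk : v k ≤ α * v k :=
    (hv k).trans (mul_le_mul_of_nonneg_left (mulVec_apply_le_of_mem_rowStochastic hM hk k) hα0)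
  exact (hk i).trans (by nlinarith)

theorem summable_pow_mul_pow_mulVec (hM : M ∈ rowStochastic ℝ n) {α : ℝ} (hα0 : 0 ≤ α)
    (hα1 : α < 1) (v : n → ℝ) (i : n) : Summable fun t : ℕ => α ^ t * (M ^ t *ᵥ v) i := by
  refine .of_norm_bounded ((summable_geometric_of_lt_one hα0 hα1).mul_right ‖v‖) fun t => ?_
  rw [norm_mul, norm_pow, Real.norm_of_nonneg hα0, Real.norm_eq_abs]
  exact mul_le_mul_of_nonneg_left
    (abs_mulVec_apply_le_norm_of_mem_rowStochastic (pow_mem hM t) v i) (pow_nonneg hα0 t)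

theorem eq_add_smul_mulVec_of_hasSum {α : ℝ} {v J : n → ℝ}
    (h : HasSum (fun t : ℕ => α ^ t • (M ^ t *ᵥ v)) J) : J = v + α • (M *ᵥ J) := by
  have hshift : HasSum (fun t : ℕ => α ^ (t + 1) • (M ^ (t + 1) *ᵥ v)) (J - v) := by
    simpa using (hasSum_nat_add_iff' 1).mpr h
  have hmap : HasSum (fun t : ℕ => α ^ (t + 1) • (M ^ (t + 1) *ᵥ v)) (α • (M *ᵥ J)) := by
    have := (h.map (mulVecLin M) (mulVecLin M).continuous_of_finiteDimensional).const_smul α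
    simpa [Function.comp_def, pow_succ', ← mulVec_mulVec, smul_smul] using this
  rw [← hshift.unique hmap]
  abel

end Matrix

theorem Pmat_mem_rowStochastic {S A : Type*} [Fintype S] [DecidableEq S] {P : S → A → S → ℝ}
    (hP0 : ∀ x a y, 0 ≤ P x a y) (hP1 : ∀ x a, ∑ y, P x a y = 1) (μ : S → A) :
    Pmat P μ ∈ rowStochastic ℝ S :=
  mem_rowStochastic_iff_sum.mpr ⟨fun x y => hP0 x (μ x) y, fun x => hP1 x (μ x)⟩

section MDP

variable {S A : Type*} [Fintype S] (P : S → A → S → ℝ) (g : S → A → ℝ) (α : ℝ)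

theorem Tpol_eq (μ : S → A) (J : S → ℝ) : Tpol P g α μ J = gvec g μ + α • (Pmat P μ *ᵥ J) :=
  rfl

theorem Tbell_le_Tpol [Fintype A] [Nonempty A] (μ : S → A) (J : S → ℝ) :
    Tbell P g α J ≤ Tpol P g α μ J := fun x =>
  Finset.inf'_le _ (Finset.mem_univ (μ x))

variable [DecidableEq S] {P α}

theorem Tpol_Jval (hP0 : ∀ x a y, 0 ≤ P x a y) (hP1 : ∀ x a, ∑ y, P x a y = 1) (hα0 : 0 ≤ α)
    (hα1 : α < 1) (μ : S → A) : Tpol P g α μ (Jval P g α μ) = Jval P g α μ := by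
  have hM := Pmat_mem_rowStochastic hP0 hP1 μ
  have hsum : HasSum (fun t : ℕ => α ^ t • (Pmat P μ ^ t *ᵥ gvec g μ)) (Jval P g α μ) :=
    Pi.hasSum.mpr fun x => (summable_pow_mul_pow_mulVec hM hα0 hα1 _ x).hasSum
  rw [Tpol_eq, ← eq_add_smul_mulVec_of_hasSum hsum]

theorem le_of_Tpol_le (hP0 : ∀ x a y, 0 ≤ P x a y) (hP1 : ∀ x a, ∑ y, P x a y = 1)
    (hα0 : 0 ≤ α) (hα1 : α < 1) {μ : S → A} {J J' : S → ℝ}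
    (hJ' : Tpol P g α μ J' = J') (hJ : Tpol P g α μ J ≤ J) : J' ≤ J := by
  have hT : Tpol P g α μ J' - Tpol P g α μ J = α • (Pmat P μ *ᵥ (J' - J)) := by
    rw [Tpol_eq, Tpol_eq, mulVec_sub, smul_sub]
    abel
  have hdiff : ∀ x, (J' - J) x ≤ α * (Pmat P μ *ᵥ (J' - J)) x := fun x =>
    calc (J' - J) x = Tpol P g α μ J' x - J x := by rw [hJ']; rfl
      _ ≤ Tpol P g α μ J' x - Tpol P g α μ J x := sub_le_sub_left (hJ x) _
      _ = α * (Pmat P μ *ᵥ (J' - J)) x := congrFun hT x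
  exact fun x => sub_nonpos.mp
    (nonpos_of_le_smul_mulVec (Pmat_mem_rowStochastic hP0 hP1 μ) hα0 hα1 hdiff x)

end MDP

theorem stmt_12_general {S A : Type*} [Fintype S] [DecidableEq S] [Fintype A] [Nonempty A]
    (P : S → A → S → ℝ) (g : S → A → ℝ) (α : ℝ)
    (hP0 : ∀ x a y, 0 ≤ P x a y) (hP1 : ∀ x a, ∑ y, P x a y = 1)
    (hα0 : 0 < α) (hα1 : α < 1)
    (μ μ' : S → A)
    (hgreedy : Tpol P g α μ' (Jval P g α μ) = Tbell P g α (Jval P g α μ)) :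
    ∀ x : S, Jval P g α μ' x ≤ Jval P g α μ x := by
  have hsuper : Tpol P g α μ' (Jval P g α μ) ≤ Jval P g α μ :=
    calc Tpol P g α μ' (Jval P g α μ) = Tbell P g α (Jval P g α μ) := hgreedy
      _ ≤ Tpol P g α μ (Jval P g α μ) := Tbell_le_Tpol P g α μ _
      _ = Jval P g α μ := Tpol_Jval g hP0 hP1 hα0.le hα1 μ
  exact le_of_Tpol_le g hP0 hP1 hα0.le hα1 (Tpol_Jval g hP0 hP1 hα0.le hα1 μ') hsuper

theorem stmt_12 {S A : Type*} [Fintype S] [Nonempty S] [DecidableEq S] [Fintype A] [Nonempty A]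
    (P : S → A → S → ℝ) (g : S → A → ℝ) (α : ℝ)
    (hP0 : ∀ x a y, 0 ≤ P x a y) (hP1 : ∀ x a, ∑ y, P x a y = 1)
    (hα0 : 0 < α) (hα1 : α < 1)
    (μ μ' : S → A)
    (hgreedy : Tpol P g α μ' (Jval P g α μ) = Tbell P g α (Jval P g α μ)) :
    ∀ x : S, Jval P g α μ' x ≤ Jval P g α μ x :=
  stmt_12_general P g α hP0 hP1 hα0 hα1 μ μ' hgreedy
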